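/- For each κ-subset R of [n], let p_R = Σ_{σ ∈ Sym([n]∖R)} Π_{i∉R} x_{i,σ(i)} (the permanent of the complementary principal submatrix). Then the family {p_R : R ⊆ [n], |R| = κ} is linearly independent over the base field, and hence the span of the order-κ partial derivatives of Perm_n has dimension at least C(n, κ). -/

import Mathlib

/-!
Specialising every off-diagonal variable `x_{i,j}` (`i ≠ j`) to `0` kills all terms of `p_R`
except the one of the identity permutation, so `p_R` maps to the squarefree monomial
`∏_{i ∉ R} x_i`; distinct `R` give distinct monomials, hence the `p_R` are independent.
Differentiating `p_A` in `x_{a,a}` with `a ∉ A` keeps exactly the permutations fixing `a`, so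
`∂_{x_{a,a}} p_A = p_{A ∪ {a}}`: each `p_R` with `|R| = κ` is an order-`κ` derivative of the
permanent, taken along the diagonal variables indexed by `R`.
-/

open MvPolynomial

/-- The `n × n` permanent polynomial `Σ_{π ∈ S_n} Π_i x_{i, π(i)}`. -/
noncomputable def permPoly (F : Type*) [CommRing F] (n : ℕ) :
    MvPolynomial (Fin n × Fin n) F :=
  ∑ π : Equiv.Perm (Fin n), ∏ i : Fin n, X (i, π i)

/-- The permanent of the principal submatrix complementary to `R`:
`p_R = Σ_{σ ∈ Sym([n]∖R)} Π_{i ∉ R} x_{i, σ(i)}`. -/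
noncomputable def subPerm (F : Type*) [CommRing F] {n : ℕ} (R : Finset (Fin n)) :
    MvPolynomial (Fin n × Fin n) F :=
  ∑ σ : Equiv.Perm {i : Fin n // i ∉ R}, ∏ i : {i : Fin n // i ∉ R},
    X ((i : Fin n), ((σ i : Fin n)))

open Finset

theorem MvPolynomial.linearIndependent_prod_X {σ R : Type*} [CommSemiring R] :
    LinearIndependent R (fun s : Finset σ => ∏ i ∈ s, (X i : MvPolynomial σ R)) := by
  classical
  have hinj : Function.Injective (fun s : Finset σ => ∑ i ∈ s, Finsupp.single i 1) := by
    intro s t h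
    ext i
    have := DFunLike.congr_fun h i
    simp only [Finsupp.finsetSum_apply, Finsupp.single_apply] at this
    by_cases hs : i ∈ s <;> by_cases ht : i ∈ t <;> simp_all
  simpa only [coe_basisMonomials, Function.comp_def, monomial_sum_one, X] using
    (basisMonomials σ R).linearIndependent.comp _ hinj

theorem LinearIndependent.card_le_finrank_span {K V ι : Type*} [Ring K] [StrongRankCondition K]
    [AddCommMonoid V] [Module K V] [Fintype ι] {v : ι → V} (hv : LinearIndependent K v)
    {D : Set V} (hD : D.Finite) (hvD : ∀ i, v i ∈ Submodule.span K D) :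
    Fintype.card ι ≤ Module.finrank K (Submodule.span K D) := by
  have := nontrivial_of_invariantBasisNumber K
  have := Module.Finite.span_of_finite K hD
  exact (finrank_span_eq_card hv).symm.trans_le
    (Submodule.finrank_mono (Submodule.span_le.2 (Set.range_subset_iff.2 hvD)))

theorem pderiv_diag_prod_X_compl {α R : Type*} [Fintype α] [DecidableEq α] [CommSemiring R]
    {s : Finset α} {a : α} (ha : a ∉ s) (σ : α → α) :
    pderiv (a, a) (∏ i ∈ sᶜ, (X (i, σ i) : MvPolynomial (α × α) R)) =
      if σ a = a then ∏ i ∈ (insert a s)ᶜ, X (i, σ i) else 0 := by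
  have hsplit : sᶜ = insert a (insert a s)ᶜ := by
    ext i; by_cases hi : i = a <;> simp [hi, ha]
  have hrest : pderiv (a, a) (∏ i ∈ (insert a s)ᶜ, (X (i, σ i) : MvPolynomial (α × α) R)) = 0 :=
    Finset.prod_induction _ (fun p => pderiv (a, a) p = 0)
      (fun p q hp hq => by simp [hp, hq]) (pderiv (a, a)).map_one_eq_zero
      fun i hi => pderiv_X_of_ne fun h => by simp_all
  rw [hsplit, prod_insert (by simp), Derivation.leibniz, hrest, smul_zero, zero_add, pderiv_X]
  by_cases h : σ a = a <;> simp [h, Prod.ext_iff]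

noncomputable def diagEval (R : Type*) [CommSemiring R] (α : Type*) [DecidableEq α] :
    MvPolynomial (α × α) R →ₐ[R] MvPolynomial α R :=
  aeval fun v => if v.1 = v.2 then X v.1 else 0

section SubPerm

variable {F : Type*} [CommRing F] {n : ℕ}

theorem subPerm_eq_sum_fixing (R : Finset (Fin n)) :
    subPerm F R = ∑ σ : Equiv.Perm (Fin n) with ∀ i ∈ R, σ i = i, ∏ i ∈ Rᶜ, X (i, σ i) := by
  rw [subPerm, Finset.sum_subtype _ (p := fun σ : Equiv.Perm (Fin n) => ∀ a, ¬a ∉ R → σ a = a)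
    (by simp)]
  refine Fintype.sum_equiv (Equiv.Perm.subtypeEquivSubtypePerm (· ∉ R)) _ _ fun τ => ?_
  rw [Finset.prod_subtype Rᶜ (p := (· ∉ R)) (by simp)]
  refine Fintype.prod_congr _ _ fun i => ?_
  rw [Equiv.Perm.subtypeEquivSubtypePerm_apply_of_mem τ i.2]

theorem permPoly_eq_subPerm_empty : permPoly F n = subPerm F ∅ := by
  simp [subPerm_eq_sum_fixing, permPoly]

theorem diagEval_subPerm (R : Finset (Fin n)) :
    diagEval F (Fin n) (subPerm F R) = ∏ i ∈ Rᶜ, X i := by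
  rw [subPerm_eq_sum_fixing, map_sum, Finset.sum_eq_single_of_mem 1 (by simp)]
  · simp [diagEval]
  · intro σ hσ hne
    obtain ⟨i, hi⟩ : ∃ i, σ i ≠ i := by
      by_contra! h
      exact hne (Equiv.ext h)
    have hiR : i ∈ Rᶜ := by
      simp only [mem_compl]
      exact fun hiR => hi ((mem_filter.1 hσ).2 i hiR)
    rw [map_prod]
    exact Finset.prod_eq_zero hiR (by simp [diagEval, Ne.symm hi])

theorem linearIndependent_subPerm :
    LinearIndependent F (fun R : Finset (Fin n) => subPerm F R) := by
  refine LinearIndependent.of_comp (diagEval F (Fin n)).toLinearMap ?_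
  simpa [Function.comp_def, diagEval_subPerm] using
    MvPolynomial.linearIndependent_prod_X.comp _ compl_injective

theorem pderiv_subPerm {R : Finset (Fin n)} {a : Fin n} (ha : a ∉ R) :
    pderiv (a, a) (subPerm F R) = subPerm F (insert a R) := by
  simp only [subPerm_eq_sum_fixing, map_sum, pderiv_diag_prod_X_compl ha]
  rw [← Finset.sum_filter, Finset.filter_filter]
  refine Finset.sum_congr (Finset.filter_congr fun σ _ => ?_) fun _ _ => rfl
  simp [and_comm]

theorem foldr_pderiv_permPoly {l : List (Fin n × Fin n)} (hl : l.Nodup)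
    (hdiag : ∀ v ∈ l, v.2 = v.1) :
    l.foldr (fun v r => pderiv v r) (permPoly F n) = subPerm F (l.toFinset.image Prod.fst) := by
  induction l with
  | nil => simp [permPoly_eq_subPerm_empty]
  | cons v t ih =>
    obtain ⟨hvt, ht⟩ := List.nodup_cons.1 hl
    have hv : v = (v.1, v.1) := Prod.ext rfl (hdiag v List.mem_cons_self)
    have hfresh : v.1 ∉ t.toFinset.image Prod.fst := by
      rw [mem_image]
      rintro ⟨u, hu, hu1⟩
      rw [List.mem_toFinset] at hu
      have hu2 : u.2 = v.2 := by
        rw [hdiag u (List.mem_cons_of_mem v hu), hdiag v List.mem_cons_self, hu1]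
      exact hvt (Prod.ext hu1 hu2 ▸ hu)
    rw [List.foldr_cons, ih ht fun u hu => hdiag u (List.mem_cons_of_mem v hu), hv,
      pderiv_subPerm hfresh, List.toFinset_cons, image_insert]

theorem subPerm_eq_foldr_pderiv_diag (R : Finset (Fin n)) :
    subPerm F R = R.diag.toList.foldr (fun v r => pderiv v r) (permPoly F n) := by
  rw [foldr_pderiv_permPoly R.diag.nodup_toList
    fun v hv => ((mem_diag.1 (mem_toList.1 hv)).2).symm, toList_toFinset]
  congr 1
  ext i
  simp

end SubPerm

/-- The family `{p_R : |R| = κ}` of complementary sub-permanents is linearly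
independent, and hence the span of the order-`κ` partial derivatives of the
permanent has dimension at least `C(n, κ)`. -/
theorem subPerm_linearIndependent_and_rank (F : Type*) [Field F] (n κ : ℕ) :
    LinearIndependent F
      (fun R : {R : Finset (Fin n) // R.card = κ} => subPerm F R.1) ∧
    n.choose κ ≤ Module.finrank F (Submodule.span F
      { q : MvPolynomial (Fin n × Fin n) F |
        ∃ S : Finset (Fin n × Fin n), S.card = κ ∧
          q = S.toList.foldr (fun v r => pderiv v r) (permPoly F n) }) := by
  have hli : LinearIndependent F
      (fun R : {R : Finset (Fin n) // R.card = κ} => subPerm F R.1) :=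
    linearIndependent_subPerm.comp _ Subtype.val_injective
  refine ⟨hli, ?_⟩
  calc n.choose κ = Fintype.card {R : Finset (Fin n) // R.card = κ} := by
        simp [Fintype.card_finset_len]
    _ ≤ _ := hli.card_le_finrank_span ?_ ?_
  · exact (Set.finite_range fun S : Finset (Fin n × Fin n) =>
      S.toList.foldr (fun v r => pderiv v r) (permPoly F n)).subset
        fun _ ⟨S, _, hq⟩ => ⟨S, hq.symm⟩
  · exact fun R => Submodule.subset_span
      ⟨R.1.diag, by rw [diag_card, R.2], subPerm_eq_foldr_pderiv_diag R.1⟩
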